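/- arXiv:2605.14072 — 2 statements merged into one kernel-verified Lean document; each statement's English description precedes it below -/
import Mathlib

section
/- Let G be a simple graph on a countably infinite vertex set V that contains an odd hole: there are m ≥ 2 and distinct vertices d_0, …, d_{2m} such that for all i ≠ j, d_i and d_j are adjacent in G iff i − j ≡ ±1 (mod 2m+1). Then there exists x : V → ℝ such that x(d_i) = 1/2 for every i, x(v) ∈ {0, 1/2, 1} for every v ∈ V, and x is an extreme point of the convex set { y : V → ℝ : ‖y‖_{𝓒(G)} ≤ 1 }. -/
open scoped ENNReal

/-- The combinatorial extended norm generated by a family of finite sets. -/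
noncomputable def combNorm {V : Type*} (F : Set (Finset V)) (x : V → ℝ) : ℝ≥0∞ :=
  ⨆ S ∈ F, ENNReal.ofReal (∑ i ∈ S, |x i|)

/-- The family of finite cliques of a graph. -/
def cliques {V : Type*} (G : SimpleGraph V) : Set (Finset V) :=
  {C | G.IsClique (C : Set V)}

section Aux

open Classical

variable {V : Type*} (G : SimpleGraph V) (H : Set V) (e : V ≃ ℕ)

/-- eligibility: w is an "earlier" neighbor of position n -/
def elig (n : ℕ) (w : V) : Prop := G.Adj (e.symm n) w ∧ (w ∈ H ∨ e w < n)

lemma elig_iff (v w : V) : elig G H e (e v) w ↔ G.Adj v w ∧ (w ∈ H ∨ e w < e v) := by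
  rw [elig, Equiv.symm_apply_apply]

open Classical in
noncomputable def stepF (n : ℕ) (prev : V → ℝ) : ℝ :=
  if (∃ w, elig G H e n w ∧ prev w = 1) ∨
      (∃ w w', elig G H e n w ∧ elig G H e n w' ∧ G.Adj w w' ∧
        prev w = 1/2 ∧ prev w' = 1/2) then 0
  else if ∃ w, elig G H e n w ∧ prev w = 1/2 then 1/2
  else 1

open Classical in
noncomputable def hfun : ℕ → ℝ :=
  WellFounded.fix wellFounded_lt (fun n ih =>
    stepF G H e n (fun w => if w ∈ H then 1/2 else if hlt : e w < n then ih (e w) hlt else 0))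

lemma hfun_eq (n : ℕ) : hfun G H e n =
    stepF G H e n (fun w => if w ∈ H then 1/2 else
      if hlt : e w < n then hfun G H e (e w) else 0) :=
  WellFounded.fix_eq _ _ _

open Classical in
noncomputable def xf : V → ℝ := fun v => if v ∈ H then 1/2 else hfun G H e (e v)

lemma xf_of_mem {v : V} (hv : v ∈ H) : xf G H e v = 1/2 := if_pos hv

lemma xf_spec {v : V} (hv : v ∉ H) : xf G H e v =
    if (∃ w, elig G H e (e v) w ∧ xf G H e w = 1) ∨
      (∃ w w', elig G H e (e v) w ∧ elig G H e (e v) w' ∧ G.Adj w w' ∧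
        xf G H e w = 1/2 ∧ xf G H e w' = 1/2) then 0
    else if ∃ w, elig G H e (e v) w ∧ xf G H e w = 1/2 then 1/2
    else 1 := by
  have key : ∀ w, (w ∈ H ∨ e w < e v) →
      (if w ∈ H then (1:ℝ)/2 else if hlt : e w < e v then hfun G H e (e w) else 0)
        = xf G H e w := by
    intro w hw
    by_cases h1 : w ∈ H
    · rw [if_pos h1, xf_of_mem G H e h1]
    · rcases hw with h | h
      · exact absurd h h1
      · rw [if_neg h1, dif_pos h, xf]
        rw [if_neg h1]
  have hx : xf G H e v = hfun G H e (e v) := if_neg hv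
  rw [hx, hfun_eq, stepF]
  have e1 : ((∃ w, elig G H e (e v) w ∧ (if w ∈ H then (1:ℝ)/2 else if hlt : e w < e v then hfun G H e (e w) else 0) = 1) ∨
      (∃ w w', elig G H e (e v) w ∧ elig G H e (e v) w' ∧ G.Adj w w' ∧
        (if w ∈ H then (1:ℝ)/2 else if hlt : e w < e v then hfun G H e (e w) else 0) = 1/2 ∧
        (if w' ∈ H then (1:ℝ)/2 else if hlt : e w' < e v then hfun G H e (e w') else 0) = 1/2)) ↔
      ((∃ w, elig G H e (e v) w ∧ xf G H e w = 1) ∨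
      (∃ w w', elig G H e (e v) w ∧ elig G H e (e v) w' ∧ G.Adj w w' ∧
        xf G H e w = 1/2 ∧ xf G H e w' = 1/2)) := by
    constructor
    · rintro (⟨w, hw, hval⟩ | ⟨w, w', hw, hw', hadj, hv1, hv2⟩)
      · exact Or.inl ⟨w, hw, by rw [← key w hw.2]; exact hval⟩
      · exact Or.inr ⟨w, w', hw, hw', hadj, by rw [← key w hw.2]; exact hv1,
          by rw [← key w' hw'.2]; exact hv2⟩
    · rintro (⟨w, hw, hval⟩ | ⟨w, w', hw, hw', hadj, hv1, hv2⟩)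
      · exact Or.inl ⟨w, hw, by rw [key w hw.2]; exact hval⟩
      · exact Or.inr ⟨w, w', hw, hw', hadj, by rw [key w hw.2]; exact hv1,
          by rw [key w' hw'.2]; exact hv2⟩
  have e2 : (∃ w, elig G H e (e v) w ∧ (if w ∈ H then (1:ℝ)/2 else if hlt : e w < e v then hfun G H e (e w) else 0) = 1/2) ↔
      (∃ w, elig G H e (e v) w ∧ xf G H e w = 1/2) := by
    constructor
    · rintro ⟨w, hw, hval⟩
      exact ⟨w, hw, by rw [← key w hw.2]; exact hval⟩
    · rintro ⟨w, hw, hval⟩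
      exact ⟨w, hw, by rw [key w hw.2]; exact hval⟩
  simp only [propext e1, propext e2]

/-- the three mutually exclusive cases for a non-hole vertex -/
lemma xf_cases {v : V} (hv : v ∉ H) :
    (((∃ w, elig G H e (e v) w ∧ xf G H e w = 1) ∨
      (∃ w w', elig G H e (e v) w ∧ elig G H e (e v) w' ∧ G.Adj w w' ∧
        xf G H e w = 1/2 ∧ xf G H e w' = 1/2)) ∧ xf G H e v = 0) ∨
    ((¬ ((∃ w, elig G H e (e v) w ∧ xf G H e w = 1) ∨
      (∃ w w', elig G H e (e v) w ∧ elig G H e (e v) w' ∧ G.Adj w w' ∧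
        xf G H e w = 1/2 ∧ xf G H e w' = 1/2))) ∧
      (∃ w, elig G H e (e v) w ∧ xf G H e w = 1/2) ∧ xf G H e v = 1/2) ∨
    ((¬ ((∃ w, elig G H e (e v) w ∧ xf G H e w = 1) ∨
      (∃ w w', elig G H e (e v) w ∧ elig G H e (e v) w' ∧ G.Adj w w' ∧
        xf G H e w = 1/2 ∧ xf G H e w' = 1/2))) ∧
      (¬ ∃ w, elig G H e (e v) w ∧ xf G H e w = 1/2) ∧ xf G H e v = 1) := by
  have h := xf_spec G H e hv
  split_ifs at h with h1 h2
  · exact Or.inl ⟨h1, h⟩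
  · exact Or.inr (Or.inl ⟨h1, h2, h⟩)
  · exact Or.inr (Or.inr ⟨h1, h2, h⟩)

lemma xf_trichotomy (v : V) : xf G H e v = 0 ∨ xf G H e v = 1/2 ∨ xf G H e v = 1 := by
  by_cases hv : v ∈ H
  · exact Or.inr (Or.inl (xf_of_mem G H e hv))
  · rcases xf_cases G H e hv with ⟨_, h⟩ | ⟨_, _, h⟩ | ⟨_, _, h⟩
    · exact Or.inl h
    · exact Or.inr (Or.inl h)
    · exact Or.inr (Or.inr h)

lemma xf_nonneg (v : V) : 0 ≤ xf G H e v := by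
  rcases xf_trichotomy G H e v with h | h | h <;> rw [h] <;> norm_num

/-- counting lemma -/
lemma sum_le_half (x : V → ℝ) (C : Finset V) (h0 : ∀ w ∈ C, x w = 0 ∨ x w = 1/2)
    (h1 : ∀ w ∈ C, ∀ w' ∈ C, x w = 1/2 → x w' = 1/2 → w = w') :
    ∑ w ∈ C, x w ≤ 1/2 := by
  classical
  induction C using Finset.induction with
  | empty => simp
  | @insert a s hni ih =>
    rw [Finset.sum_insert hni]
    rcases h0 a (Finset.mem_insert_self a s) with ha | ha
    · rw [ha, zero_add]
      exact ih (fun w hw => h0 w (Finset.mem_insert_of_mem hw))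
        (fun w hw w' hw' => h1 w (Finset.mem_insert_of_mem hw) w' (Finset.mem_insert_of_mem hw'))
    · have hs : ∑ w ∈ s, x w = 0 := by
        apply Finset.sum_eq_zero
        intro w hw
        rcases h0 w (Finset.mem_insert_of_mem hw) with h | h
        · exact h
        · exfalso
          have := h1 a (Finset.mem_insert_self a s) w (Finset.mem_insert_of_mem hw) ha h
          exact hni (this ▸ hw)
      rw [ha, hs]
      norm_num

end Aux

section Hole
variable {V : Type*} (G : SimpleGraph V) {m : ℕ} (d : ZMod (2*m+1) → V)

lemma zmod_facts (hm : 2 ≤ m) : (1 : ZMod (2*m+1)) ≠ 0 ∧ (3 : ZMod (2*m+1)) ≠ 0 := by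
  haveI : NeZero (2*m+1) := ⟨by omega⟩
  constructor
  · intro h
    have h1 : ((1:ℕ) : ZMod (2*m+1)) = 0 := by exact_mod_cast h
    have := (ZMod.natCast_eq_zero_iff 1 (2*m+1)).1 h1
    have := Nat.le_of_dvd one_pos this
    omega
  · intro h
    have h1 : ((3:ℕ) : ZMod (2*m+1)) = 0 := by exact_mod_cast h
    have := (ZMod.natCast_eq_zero_iff 3 (2*m+1)).1 h1
    have := Nat.le_of_dvd (by norm_num) this
    omega

lemma hole_card (hm : 2 ≤ m) (hd : Function.Injective d)
    (hcyc : ∀ i j : ZMod (2 * m + 1), i ≠ j →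
      (G.Adj (d i) (d j) ↔ (j = i + 1 ∨ i = j + 1)))
    (C : Finset V) (hC : G.IsClique (C : Set V)) (hsub : ∀ w ∈ C, w ∈ Set.range d) :
    C.card ≤ 2 := by
  obtain ⟨h1, h3⟩ := zmod_facts (m := m) hm
  by_contra hcard
  obtain ⟨u, hu, v, hv, w, hw, huv, huw, hvw⟩ :=
    (Finset.two_lt_card (s := C)).1 (by omega)
  obtain ⟨i, rfl⟩ := hsub u hu
  obtain ⟨j, rfl⟩ := hsub v hv
  obtain ⟨k, rfl⟩ := hsub w hw
  have hij : i ≠ j := fun h => huv (by rw [h])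
  have hik : i ≠ k := fun h => huw (by rw [h])
  have hjk : j ≠ k := fun h => hvw (by rw [h])
  have Aij := (hcyc i j hij).1 (hC (Finset.mem_coe.2 hu) (Finset.mem_coe.2 hv) huv)
  have Aik := (hcyc i k hik).1 (hC (Finset.mem_coe.2 hu) (Finset.mem_coe.2 hw) huw)
  have Ajk := (hcyc j k hjk).1 (hC (Finset.mem_coe.2 hv) (Finset.mem_coe.2 hw) hvw)
  rcases Aij with h_ij | h_ij <;> rcases Aik with h_ik | h_ik <;> rcases Ajk with h_jk | h_jk
  · exact hjk (by rw [h_ij, h_ik])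
  · exact hjk (by rw [h_ij, h_ik])
  · exact h3 (by linear_combination - h_ij - h_ik - h_jk)
  · exact h1 (by linear_combination h_jk - h_ij - h_ik)
  · exact h1 (by linear_combination - h_ij - h_ik + h_jk)
  · exact h3 (by linear_combination - h_ij - h_ik - h_jk)
  · exact hik (by rw [h_ij, h_jk])
  · exact h1 (by linear_combination - h_ij + h_ik - h_jk)

end Hole


lemma clique_sum_le {V : Type*} (G : SimpleGraph V) {m : ℕ} (d : ZMod (2*m+1) → V)
    (e : V ≃ ℕ) (hm : 2 ≤ m) (hd : Function.Injective d)
    (hcyc : ∀ i j : ZMod (2 * m + 1), i ≠ j →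
      (G.Adj (d i) (d j) ↔ (j = i + 1 ∨ i = j + 1)))
    (C : Finset V) (hC : G.IsClique (C : Set V)) :
    ∑ w ∈ C, xf G (Set.range d) e w ≤ 1 := by
  classical
  set H := Set.range d with hH
  set x := xf G H e with hxdef
  induction C using Finset.strongInductionOn with
  | _ C ih =>
  by_cases hCH : ∀ w ∈ C, w ∈ H
  · have hcard := hole_card G d hm hd hcyc C hC hCH
    have : ∑ w ∈ C, x w = ∑ w ∈ C, (1:ℝ)/2 :=
      Finset.sum_congr rfl (fun w hw => xf_of_mem G H e (hCH w hw))
    rw [this, Finset.sum_const, nsmul_eq_mul]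
    have : (C.card : ℝ) ≤ 2 := by exact_mod_cast hcard
    linarith
  · push_neg at hCH
    obtain ⟨u0, hu0C, hu0H⟩ := hCH
    set S := C.filter (fun w => w ∉ H) with hS
    have hSne : S.Nonempty := ⟨u0, Finset.mem_filter.2 ⟨hu0C, hu0H⟩⟩
    obtain ⟨u, huS, hmax⟩ := Finset.exists_max_image S e hSne
    have huC : u ∈ C := (Finset.mem_filter.1 huS).1
    have huH : u ∉ H := (Finset.mem_filter.1 huS).2
    have hsplit : ∑ w ∈ C, x w = x u + ∑ w ∈ C.erase u, x w :=
      (Finset.add_sum_erase C x huC).symm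
    have hCe : G.IsClique ((C.erase u : Finset V) : Set V) :=
      hC.subset (by simp [Finset.coe_subset, Finset.erase_subset])
    have helig : ∀ w ∈ C.erase u, elig G H e (e u) w := by
      intro w hw
      have hwC := Finset.mem_of_mem_erase hw
      have hne : w ≠ u := Finset.ne_of_mem_erase hw
      rw [elig_iff]
      refine ⟨hC (Finset.mem_coe.2 huC) (Finset.mem_coe.2 hwC) hne.symm, ?_⟩
      by_cases hwH : w ∈ H
      · exact Or.inl hwH
      · refine Or.inr (lt_of_le_of_ne (hmax w (Finset.mem_filter.2 ⟨hwC, hwH⟩)) ?_)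
        exact fun h => hne (e.injective h)
    rcases xf_cases G H e huH with ⟨_, hval0⟩ | ⟨hncond, _, hval0⟩ | ⟨hncond, hnhalf, hval0⟩ <;> have hval : x u = xf G H e u := rfl <;> rw [hval0] at hval
    · -- x u = 0
      have := ih (C.erase u) (Finset.erase_ssubset huC) hCe
      rw [hsplit, hval]
      linarith
    · -- x u = 1/2
      have hrest : ∑ w ∈ C.erase u, x w ≤ 1/2 := by
        apply sum_le_half
        · intro w hw
          by_cases hwH : w ∈ H
          · exact Or.inr (xf_of_mem G H e hwH)
          · rcases xf_trichotomy G H e w with h | h | h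
            · exact Or.inl h
            · exact Or.inr h
            · exact absurd (Or.inl ⟨w, helig w hw, h⟩) hncond
        · intro w hw w' hw' h2 h2'
          by_contra hne
          have hadj : G.Adj w w' :=
            hCe (Finset.mem_coe.2 hw) (Finset.mem_coe.2 hw') hne
          exact hncond (Or.inr ⟨w, w', helig w hw, helig w' hw', hadj, h2, h2'⟩)
      rw [hsplit, hval]
      linarith
    · -- x u = 1
      have hrest : ∑ w ∈ C.erase u, x w = 0 := by
        apply Finset.sum_eq_zero
        intro w hw
        by_cases hwH : w ∈ H
        · exact absurd ⟨w, helig w hw, xf_of_mem G H e hwH⟩ hnhalf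
        · rcases xf_trichotomy G H e w with h | h | h
          · exact h
          · exact absurd ⟨w, helig w hw, h⟩ hnhalf
          · exact absurd (Or.inl ⟨w, helig w hw, h⟩) hncond
      rw [hsplit, hval, hrest]
      norm_num


lemma pin_aux {V : Type*} (G : SimpleGraph V) {m : ℕ} (d : ZMod (2*m+1) → V)
    (e : V ≃ ℕ) (hm : 2 ≤ m) (hd : Function.Injective d)
    (hcyc : ∀ i j : ZMod (2 * m + 1), i ≠ j →
      (G.Adj (d i) (d j) ↔ (j = i + 1 ∨ i = j + 1)))
    (a b : V → ℝ) (ha : combNorm (cliques G) a ≤ 1) (hb : combNorm (cliques G) b ≤ 1)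
    (t s : ℝ) (ht : 0 < t) (hs : 0 < s) (hts : t + s = 1)
    (hcomb : ∀ v, t * a v + s * b v = xf G (Set.range d) e v) :
    ∀ v, a v = xf G (Set.range d) e v := by
  classical
  set H := Set.range d with hH
  set x := xf G H e with hxdef
  haveI : NeZero (2*m+1) := ⟨by omega⟩
  haveI : Fact (1 < 2*m+1) := ⟨by omega⟩
  -- extraction of clique-sum bounds
  have habs : ∀ (y : V → ℝ), combNorm (cliques G) y ≤ 1 → ∀ C : Finset V,
      G.IsClique (C : Set V) → ∑ w ∈ C, |y w| ≤ 1 := by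
    intro y hy C hCm
    have h1 : ENNReal.ofReal (∑ w ∈ C, |y w|) ≤ 1 :=
      le_trans (le_iSup₂ (f := fun S (_ : S ∈ cliques G) =>
        ENNReal.ofReal (∑ i ∈ S, |y i|)) C hCm) hy
    exact ENNReal.ofReal_le_one.1 h1
  -- tight cliques
  have tight : ∀ C : Finset V, G.IsClique (C : Set V) → ∑ w ∈ C, x w = 1 →
      ∑ w ∈ C, a w = 1 := by
    intro C hCq hC1
    have hSa : ∑ w ∈ C, a w ≤ 1 :=
      le_trans (Finset.sum_le_sum fun w _ => le_abs_self _) (habs a ha C hCq)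
    have hSb : ∑ w ∈ C, b w ≤ 1 :=
      le_trans (Finset.sum_le_sum fun w _ => le_abs_self _) (habs b hb C hCq)
    have hsum : t * (∑ w ∈ C, a w) + s * (∑ w ∈ C, b w) = 1 := by
      rw [Finset.mul_sum, Finset.mul_sum, ← Finset.sum_add_distrib]
      rw [← hC1]
      exact Finset.sum_congr rfl (fun w _ => hcomb w)
    nlinarith [mul_le_mul_of_nonneg_left hSa ht.le, mul_le_mul_of_nonneg_left hSb hs.le]
  have pinAt : ∀ C : Finset V, G.IsClique (C : Set V) → ∑ w ∈ C, x w = 1 →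
      ∀ v ∈ C, (∀ w ∈ C, w ≠ v → a w = x w) → a v = x v := by
    intro C hCq hC1 v hv hrest
    have h1 : a v + ∑ w ∈ C.erase v, a w = 1 := by
      rw [Finset.add_sum_erase C a hv]; exact tight C hCq hC1
    have h2 : x v + ∑ w ∈ C.erase v, x w = 1 := by
      rw [Finset.add_sum_erase C x hv]; exact hC1
    have h3 : ∑ w ∈ C.erase v, a w = ∑ w ∈ C.erase v, x w :=
      Finset.sum_congr rfl (fun w hw =>
        hrest w (Finset.mem_of_mem_erase hw) (Finset.ne_of_mem_erase hw))
    linarith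
  -- hole pinning
  have hdi_mem : ∀ i, d i ∈ H := fun i => ⟨i, rfl⟩
  have hxd : ∀ i, x (d i) = 1/2 := fun i => xf_of_mem G H e (hdi_mem i)
  have hne_succ : ∀ i : ZMod (2*m+1), i ≠ i + 1 := by
    intro i h
    have : (0:ZMod (2*m+1)) = 1 := by linear_combination h
    exact zero_ne_one this
  have hadj_succ : ∀ i : ZMod (2*m+1), G.Adj (d i) (d (i+1)) := fun i =>
    (hcyc i (i+1) (hne_succ i)).2 (Or.inl rfl)
  have hpair_clique : ∀ i : ZMod (2*m+1),
      G.IsClique (({d i, d (i+1)} : Finset V) : Set V) := by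
    intro i
    rw [Finset.coe_insert, Finset.coe_singleton]
    rw [SimpleGraph.isClique_iff]
    intro u hu v hv huv
    rcases hu with rfl | hu <;> rcases hv with rfl | hv
    · exact absurd rfl huv
    · rw [Set.mem_singleton_iff] at hv; subst hv; exact hadj_succ i
    · rw [Set.mem_singleton_iff] at hu; subst hu; exact (hadj_succ i).symm
    · rw [Set.mem_singleton_iff] at hu hv; subst hu; subst hv; exact absurd rfl huv
  have hd_ne : ∀ i : ZMod (2*m+1), d i ≠ d (i+1) := fun i h => hne_succ i (hd h)
  have hpair_sum : ∀ i : ZMod (2*m+1), ∑ w ∈ ({d i, d (i+1)} : Finset V), x w = 1 := by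
    intro i
    rw [Finset.sum_pair (hd_ne i), hxd, hxd]
    norm_num
  have hedge : ∀ i : ZMod (2*m+1), a (d i) + a (d (i+1)) = 1 := by
    intro i
    have := tight _ (hpair_clique i) (hpair_sum i)
    rwa [Finset.sum_pair (hd_ne i)] at this
  have hstep2 : ∀ i : ZMod (2*m+1), a (d (i + 2)) = a (d i) := by
    intro i
    have h1 := hedge i
    have h2 := hedge (i+1)
    have : i + 1 + 1 = i + 2 := by ring
    rw [this] at h2
    linarith
  have hiter : ∀ (k : ℕ) (i : ZMod (2*m+1)), a (d (i + 2 * (k : ZMod (2*m+1)))) = a (d i) := by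
    intro k
    induction k with
    | zero => intro i; norm_num
    | succ k ihk =>
      intro i
      have : i + 2 * ((k+1 : ℕ) : ZMod (2*m+1)) = (i + 2) + 2 * (k : ZMod (2*m+1)) := by
        push_cast; ring
      rw [this, ihk (i+2), hstep2]
  have h21 : (2 : ZMod (2*m+1)) * ((m : ZMod (2*m+1)) + 1) = 1 := by
    have h0 : ((2*m+1 : ℕ) : ZMod (2*m+1)) = 0 := ZMod.natCast_self _
    push_cast at h0
    linear_combination h0
  have hconst : ∀ i j : ZMod (2*m+1), a (d i) = a (d j) := by
    intro i j
    set k : ℕ := (((m : ZMod (2*m+1)) + 1) * (j - i)).val with hk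
    have hkc : ((k : ℕ) : ZMod (2*m+1)) = ((m : ZMod (2*m+1)) + 1) * (j - i) := by
      rw [hk, ZMod.natCast_val, ZMod.cast_id]
    have : i + 2 * ((k : ℕ) : ZMod (2*m+1)) = j := by
      rw [hkc]
      have : (2 : ZMod (2*m+1)) * (((m : ZMod (2*m+1)) + 1) * (j - i)) = j - i := by
        rw [← mul_assoc, h21, one_mul]
      linear_combination this
    rw [← this, hiter]
  have hpinH : ∀ i : ZMod (2*m+1), a (d i) = 1/2 := by
    intro i
    have h1 := hedge i
    have h2 := hconst i (i+1)
    linarith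
  have hpinH' : ∀ v ∈ H, a v = x v := by
    rintro v ⟨i, rfl⟩
    rw [hpinH i, hxd i]
  -- non-hole pinning by strong induction on e v
  have main : ∀ n : ℕ, ∀ v, v ∉ H → e v = n → a v = x v := by
    intro n
    induction n using Nat.strong_induction_on with
    | _ n ihn =>
    intro v hvH hev
    have hpelig : ∀ w, elig G H e (e v) w → a w = x w := by
      intro w hw
      rw [elig_iff] at hw
      by_cases hwH : w ∈ H
      · exact hpinH' w hwH
      · rcases hw.2 with h | h
        · exact absurd h hwH
        · exact ihn (e w) (hev ▸ h) w hwH rfl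
    rcases xf_cases G H e hvH with ⟨hcond, hval⟩ | ⟨_, ⟨w, hw, hwhalf⟩, hval⟩ |
      ⟨_, _, hval⟩
    · rcases hcond with ⟨w, hw, hw1⟩ | ⟨w, w', hw, hw', hadj, h2, h2'⟩
      · -- clique {v, w}, x w = 1
        have hadjvw : G.Adj v w := ((elig_iff G H e v w).1 hw).1
        have hvne : v ≠ w := G.ne_of_adj hadjvw
        have hclique : G.IsClique (({v, w} : Finset V) : Set V) := by
          rw [Finset.coe_insert, Finset.coe_singleton, SimpleGraph.isClique_iff]
          intro p hp q hq hpq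
          rcases hp with rfl | hp <;> rcases hq with rfl | hq
          · exact absurd rfl hpq
          · rw [Set.mem_singleton_iff] at hq; subst hq; exact hadjvw
          · rw [Set.mem_singleton_iff] at hp; subst hp; exact hadjvw.symm
          · rw [Set.mem_singleton_iff] at hp hq; subst hp; subst hq; exact absurd rfl hpq
        simp only [← hxdef] at hval hw1
        have hsum : ∑ p ∈ ({v, w} : Finset V), x p = 1 := by
          rw [Finset.sum_pair hvne, hval, hw1]
          norm_num
        apply pinAt _ hclique hsum v (Finset.mem_insert_self v _)
        intro p hp hpv
        rcases Finset.mem_insert.1 hp with rfl | hp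
        · exact absurd rfl hpv
        · rw [Finset.mem_singleton] at hp; subst hp; exact hpelig p hw
      · -- clique {v, w, w'}, x w = x w' = 1/2
        have hadjvw : G.Adj v w := ((elig_iff G H e v w).1 hw).1
        have hadjvw' : G.Adj v w' := ((elig_iff G H e v w').1 hw').1
        have hvw : v ≠ w := G.ne_of_adj hadjvw
        have hvw' : v ≠ w' := G.ne_of_adj hadjvw'
        have hww' : w ≠ w' := G.ne_of_adj hadj
        have hclique : G.IsClique (({v, w, w'} : Finset V) : Set V) := by
          rw [Finset.coe_insert, Finset.coe_insert, Finset.coe_singleton,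
            SimpleGraph.isClique_iff]
          intro p hp q hq hpq
          simp only [Set.mem_insert_iff, Set.mem_singleton_iff] at hp hq
          rcases hp with rfl | rfl | rfl <;> rcases hq with rfl | rfl | rfl <;>
            first
            | exact absurd rfl hpq
            | exact hadjvw
            | exact hadjvw'
            | exact hadjvw.symm
            | exact hadjvw'.symm
            | exact hadj
            | exact hadj.symm
        simp only [← hxdef] at hval h2 h2'
        have hsum : ∑ p ∈ ({v, w, w'} : Finset V), x p = 1 := by
          rw [Finset.sum_insert (by simp [hvw, hvw']), Finset.sum_pair hww', hval, h2, h2']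
          norm_num
        apply pinAt _ hclique hsum v (Finset.mem_insert_self v _)
        intro p hp hpv
        rcases Finset.mem_insert.1 hp with rfl | hp
        · exact absurd rfl hpv
        · rcases Finset.mem_insert.1 hp with rfl | hp
          · exact hpelig p hw
          · rw [Finset.mem_singleton] at hp; subst hp; exact hpelig p hw'
    · -- clique {v, w}, x w = 1/2, x v = 1/2
      have hadjvw : G.Adj v w := ((elig_iff G H e v w).1 hw).1
      have hvne : v ≠ w := G.ne_of_adj hadjvw
      have hclique : G.IsClique (({v, w} : Finset V) : Set V) := by
        rw [Finset.coe_insert, Finset.coe_singleton, SimpleGraph.isClique_iff]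
        intro p hp q hq hpq
        rcases hp with rfl | hp <;> rcases hq with rfl | hq
        · exact absurd rfl hpq
        · rw [Set.mem_singleton_iff] at hq; subst hq; exact hadjvw
        · rw [Set.mem_singleton_iff] at hp; subst hp; exact hadjvw.symm
        · rw [Set.mem_singleton_iff] at hp hq; subst hp; subst hq; exact absurd rfl hpq
      simp only [← hxdef] at hval hwhalf
      have hsum : ∑ p ∈ ({v, w} : Finset V), x p = 1 := by
        rw [Finset.sum_pair hvne, hval, hwhalf]
        norm_num
      apply pinAt _ hclique hsum v (Finset.mem_insert_self v _)
      intro p hp hpv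
      rcases Finset.mem_insert.1 hp with rfl | hp
      · exact absurd rfl hpv
      · rw [Finset.mem_singleton] at hp; subst hp; exact hpelig p hw
    · -- singleton clique, x v = 1
      have hclique : G.IsClique (({v} : Finset V) : Set V) := by
        rw [Finset.coe_singleton]
        exact G.isClique_singleton v
      simp only [← hxdef] at hval
      have hsum : ∑ p ∈ ({v} : Finset V), x p = 1 := by
        rw [Finset.sum_singleton, hval]
      apply pinAt _ hclique hsum v (Finset.mem_singleton_self v)
      intro p hp hpv
      rw [Finset.mem_singleton] at hp
      exact absurd hp hpv
  intro v
  by_cases hvH : v ∈ H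
  · exact hpinH' v hvH
  · exact main (e v) v hvH rfl

theorem stmt_18 {V : Type*} [Countable V] [Infinite V] (G : SimpleGraph V)
    (m : ℕ) (hm : 2 ≤ m) (d : ZMod (2 * m + 1) → V) (hd : Function.Injective d)
    (hcyc : ∀ i j : ZMod (2 * m + 1), i ≠ j →
      (G.Adj (d i) (d j) ↔ (j = i + 1 ∨ i = j + 1))) :
    ∃ x : V → ℝ, (∀ i, x (d i) = 1 / 2) ∧ (∀ v, x v = 0 ∨ x v = 1 / 2 ∨ x v = 1) ∧
      x ∈ Set.extremePoints ℝ {y : V → ℝ | combNorm (cliques G) y ≤ 1} := by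
  classical
  obtain ⟨e⟩ : Nonempty (V ≃ ℕ) := nonempty_equiv_of_countable
  set H := Set.range d with hH
  refine ⟨xf G H e, fun i => xf_of_mem G H e ⟨i, rfl⟩, xf_trichotomy G H e, ?_⟩
  have hmem : xf G H e ∈ {y : V → ℝ | combNorm (cliques G) y ≤ 1} := by
    rw [Set.mem_setOf_eq, combNorm]
    apply iSup₂_le
    intro C hC
    rw [← ENNReal.ofReal_one]
    apply ENNReal.ofReal_le_ofReal
    have : ∑ i ∈ C, |xf G H e i| = ∑ i ∈ C, xf G H e i :=
      Finset.sum_congr rfl (fun w _ => abs_of_nonneg (xf_nonneg G H e w))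
    rw [this]
    exact clique_sum_le G d e hm hd hcyc C hC
  rw [mem_extremePoints]
  refine ⟨hmem, ?_⟩
  intro a ha b hb hseg
  obtain ⟨t, s, ht, hs, hts, hcomb⟩ := hseg
  rw [Set.mem_setOf_eq] at ha hb
  have hcomb' : ∀ v, t * a v + s * b v = xf G (Set.range d) e v := by
    intro v
    rw [← hH]
    calc t * a v + s * b v = (t • a + s • b) v := by
          simp [Pi.add_apply, Pi.smul_apply, smul_eq_mul]
      _ = xf G H e v := by rw [hcomb]
  have hcomb'' : ∀ v, s * b v + t * a v = xf G (Set.range d) e v := by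
    intro v; rw [← hcomb' v]; ring
  constructor
  · funext v
    exact pin_aux G d e hm hd hcyc a b ha hb t s ht hs hts hcomb' v
  · funext v
    exact pin_aux G d e hm hd hcyc b a hb ha s t hs ht (by linarith) hcomb'' v
end

section
/- Let n ≥ 2 and let G be a (2n+1)-antihole, i.e., the complement of the cycle graph of length 2n+1, on a vertex set V with |V| = 2n+1. If x : V → ℝ satisfies |x(v)| = 1/n for every v ∈ V, then x is an extreme point of the convex set { y : V → ℝ : ‖y‖_{𝓒(G)} ≤ 1 }. -/
open scoped ENNReal
open Finset

lemma combNorm_le_one_iff {V : Type*} (F : Set (Finset V)) (x : V → ℝ) :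
    combNorm F x ≤ 1 ↔ ∀ S ∈ F, ∑ i ∈ S, |x i| ≤ 1 := by
  unfold combNorm
  rw [iSup₂_le_iff]
  constructor
  · intro h S hS
    have h2 := h S hS
    rwa [← ENNReal.ofReal_one, ENNReal.ofReal_le_ofReal_iff (by norm_num)] at h2
  · intro h S hS
    rw [← ENNReal.ofReal_one]
    exact ENNReal.ofReal_le_ofReal (h S hS)

lemma cast_inj_lt {N : ℕ} [NeZero N] {a b : ℕ} (ha : a < N) (hb : b < N)
    (h : (a : ZMod N) = b) : a = b := by
  have h2 := congrArg ZMod.val h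
  rwa [ZMod.val_cast_of_lt ha, ZMod.val_cast_of_lt hb] at h2

lemma const_of_succ {N : ℕ} [NeZero N] (g : ZMod N → ℝ)
    (h : ∀ i, g (i + 1) = g i) (i j : ZMod N) : g i = g j := by
  have key : ∀ k : ℕ, ∀ i : ZMod N, g (i + (k : ZMod N)) = g i := by
    intro k
    induction k with
    | zero => simp
    | succ m ih =>
      intro i
      rw [show ((m + 1 : ℕ) : ZMod N) = ((m : ℕ) : ZMod N) + 1 by push_cast; ring,
        ← add_assoc, h, ih]
  have h2 : ((((j - i).val : ℕ)) : ZMod N) = j - i := ZMod.natCast_zmod_val _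
  calc g i = g (i + ((j - i).val : ℕ)) := (key _ i).symm
    _ = g j := by rw [h2]; ring_nf

theorem stmt_19 {V : Type*} [Fintype V] (n : ℕ) (hn : 2 ≤ n) (G : SimpleGraph V)
    (v : ZMod (2 * n + 1) → V) (hv : Function.Bijective v)
    (hadj : ∀ i j : ZMod (2 * n + 1),
      G.Adj (v i) (v j) ↔ (i ≠ j ∧ j ≠ i + 1 ∧ i ≠ j + 1))
    (x : V → ℝ) (hx : ∀ w : V, |x w| = 1 / (n : ℝ)) :
    x ∈ Set.extremePoints ℝ {y : V → ℝ | combNorm (cliques G) y ≤ 1} := by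
  haveI : NeZero (2 * n + 1) := ⟨by omega⟩
  have hnR : (0 : ℝ) < n := by positivity
  classical
  -- the shifted maximum cliques
  set S : ZMod (2 * n + 1) → Finset V :=
    fun i => (Finset.range n).image (fun m : ℕ => v (i + ((2 * m : ℕ) : ZMod (2 * n + 1)))) with hSdef
  have hinj : ∀ i : ZMod (2 * n + 1), ∀ a ∈ Finset.range n, ∀ b ∈ Finset.range n,
      v (i + ((2 * a : ℕ) : ZMod (2 * n + 1))) = v (i + ((2 * b : ℕ) : ZMod (2 * n + 1))) → a = b := by
    intro i a ha b hb h
    simp only [Finset.mem_range] at ha hb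
    have h1 : i + ((2 * a : ℕ) : ZMod (2 * n + 1)) = i + ((2 * b : ℕ) : ZMod (2 * n + 1)) := hv.1 h
    have h2 : ((2 * a : ℕ) : ZMod (2 * n + 1)) = ((2 * b : ℕ) : ZMod (2 * n + 1)) :=
      add_left_cancel h1
    have := cast_inj_lt (by omega) (by omega) h2
    omega
  have hSsum : ∀ (i : ZMod (2 * n + 1)) (f : V → ℝ),
      ∑ w ∈ S i, f w = ∑ m ∈ Finset.range n, f (v (i + ((2 * m : ℕ) : ZMod (2 * n + 1)))) := by
    intro i f
    exact Finset.sum_image (hinj i)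
  -- key cast fact
  have hcast : ∀ {a b : ℕ}, a < 2 * n + 1 → b < 2 * n + 1 → a ≠ b →
      ((a : ℕ) : ZMod (2 * n + 1)) ≠ ((b : ℕ) : ZMod (2 * n + 1)) := by
    intro a b ha hb hne h
    exact hne (cast_inj_lt ha hb h)
  have hSclique : ∀ i : ZMod (2 * n + 1), S i ∈ cliques G := by
    intro i
    intro w1 h1 w2 h2 hne
    simp only [hSdef, Finset.coe_image, Set.mem_image, Finset.mem_coe, Finset.mem_range] at h1 h2
    obtain ⟨a, ha, rfl⟩ := h1
    obtain ⟨b, hb, rfl⟩ := h2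
    rw [hadj]
    have hab : a ≠ b := fun h => hne (by rw [h])
    refine ⟨fun h => hne (by rw [h]), ?_, ?_⟩
    · intro h
      have h'' : i + ((2 * b : ℕ) : ZMod (2 * n + 1)) =
          i + (((2 * a : ℕ) : ZMod (2 * n + 1)) + 1) := by rw [h, add_assoc]
      have h' : ((2 * b : ℕ) : ZMod (2 * n + 1)) = ((2 * a + 1 : ℕ) : ZMod (2 * n + 1)) := by
        have h3 := add_left_cancel h''
        push_cast at h3 ⊢
        linear_combination h3
      exact hcast (by omega) (by omega) (by omega) h'
    · intro h
      have h'' : i + ((2 * a : ℕ) : ZMod (2 * n + 1)) =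
          i + (((2 * b : ℕ) : ZMod (2 * n + 1)) + 1) := by rw [h, add_assoc]
      have h' : ((2 * a : ℕ) : ZMod (2 * n + 1)) = ((2 * b + 1 : ℕ) : ZMod (2 * n + 1)) := by
        have h3 := add_left_cancel h''
        push_cast at h3 ⊢
        linear_combination h3
      exact hcast (by omega) (by omega) (by omega) h'
  have hcover : ∀ w : V, ∃ i : ZMod (2 * n + 1), w ∈ S i := by
    intro w
    obtain ⟨j, rfl⟩ := hv.2 w
    refine ⟨j, ?_⟩
    simp only [hSdef, Finset.mem_image, Finset.mem_range]
    exact ⟨0, by omega, by norm_num⟩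
  -- cliques have size at most n
  have hcliquecard : ∀ C ∈ cliques G, C.card ≤ n := by
    intro C hC
    set e : ZMod (2 * n + 1) ≃ V := Equiv.ofBijective v hv with he
    set I : Finset (ZMod (2 * n + 1)) := C.map e.symm.toEmbedding with hI
    have hIcard : I.card = C.card := Finset.card_map _
    have hmemI : ∀ i : ZMod (2 * n + 1), i ∈ I ↔ v i ∈ C := by
      intro i
      simp only [hI, Finset.mem_map, Equiv.coe_toEmbedding]
      constructor
      · rintro ⟨w, hw, rfl⟩
        have : v (e.symm w) = w := e.apply_symm_apply w
        rwa [this]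
      · intro hvi
        exact ⟨v i, hvi, by rw [he]; exact e.symm_apply_apply i⟩
    have hnotadj : ∀ i ∈ I, ∀ j ∈ I, i ≠ j → i ≠ j + 1 := by
      intro i hi j hj hne
      have hvne : v i ≠ v j := fun h => hne (hv.1 h)
      have hadj' := hC ((hmemI i).1 hi) ((hmemI j).1 hj) hvne
      exact ((hadj i j).1 hadj').2.2
    have h10 : (1 : ZMod (2 * n + 1)) ≠ 0 := by
      intro h
      have : ((1 : ℕ) : ZMod (2 * n + 1)) = ((0 : ℕ) : ZMod (2 * n + 1)) := by push_cast; exact h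
      have := cast_inj_lt (by omega) (by omega) this
      omega
    have hdisj : Disjoint I (I.image (· + 1)) := by
      rw [Finset.disjoint_left]
      intro a ha hmem
      simp only [Finset.mem_image] at hmem
      obtain ⟨b, hb, hba⟩ := hmem
      by_cases hab : a = b
      · subst hab
        exact h10 (by linear_combination hba)
      · exact hnotadj a ha b hb hab hba.symm
    have hcard2 : I.card + (I.image (· + 1)).card ≤ 2 * n + 1 := by
      rw [← Finset.card_union_of_disjoint hdisj]
      calc (I ∪ I.image (· + 1)).card ≤ Fintype.card (ZMod (2 * n + 1)) := Finset.card_le_univ _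
        _ = 2 * n + 1 := ZMod.card _
    have himg : (I.image (· + 1)).card = I.card :=
      Finset.card_image_of_injective _ (add_left_injective 1)
    omega
  -- x is in the set
  have hmem1 : ∀ u : V → ℝ, (∀ w, |u w| = 1 / (n : ℝ)) →
      combNorm (cliques G) u ≤ 1 := by
    intro u hu
    rw [combNorm_le_one_iff]
    intro C hC
    have : ∑ i ∈ C, |u i| = (C.card : ℝ) * (1 / n) := by
      rw [Finset.sum_congr rfl (fun w _ => hu w), Finset.sum_const, nsmul_eq_mul]
    rw [this]
    have hcn : (C.card : ℝ) ≤ n := by exact_mod_cast hcliquecard C hC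
    calc (C.card : ℝ) * (1 / n) ≤ n * (1 / n) := by
          apply mul_le_mul_of_nonneg_right hcn; positivity
      _ = 1 := by field_simp
  have hxmem : x ∈ {y : V → ℝ | combNorm (cliques G) y ≤ 1} := hmem1 x hx
  rw [mem_extremePoints]
  refine ⟨hxmem, ?_⟩
  intro y hy z hz hseg
  obtain ⟨t, s, ht, hs, hts, hsum⟩ := hseg
  have hsum' : ∀ w, t * y w + s * z w = x w := by
    intro w
    have := congrFun hsum w
    simpa using this
  have hy' : ∀ C ∈ cliques G, ∑ i ∈ C, |y i| ≤ 1 := (combNorm_le_one_iff _ _).1 hy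
  have hz' : ∀ C ∈ cliques G, ∑ i ∈ C, |z i| ≤ 1 := (combNorm_le_one_iff _ _).1 hz
  -- sum of |x| over each S i equals 1
  have hxS : ∀ i, ∑ w ∈ S i, |x w| = 1 := by
    intro i
    rw [hSsum]
    rw [Finset.sum_congr rfl (fun m _ => hx _), Finset.sum_const, Finset.card_range,
      nsmul_eq_mul]
    field_simp
  -- pointwise: |x w| ≤ t|y w| + s|z w|
  have hptle : ∀ w, |x w| ≤ t * |y w| + s * |z w| := by
    intro w
    calc |x w| = |t * y w + s * z w| := by rw [hsum' w]
      _ ≤ |t * y w| + |s * z w| := abs_add_le _ _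
      _ = t * |y w| + s * |z w| := by
          rw [abs_mul, abs_mul, abs_of_pos ht, abs_of_pos hs]
  -- a := t|y| + s|z| equals 1/n everywhere
  have ha : ∀ w, t * |y w| + s * |z w| = 1 / (n : ℝ) := by
    intro w
    obtain ⟨i, hwi⟩ := hcover w
    have hsale : ∑ w ∈ S i, (t * |y w| + s * |z w|) ≤ 1 := by
      rw [Finset.sum_add_distrib, ← Finset.mul_sum, ← Finset.mul_sum]
      have h1 := hy' (S i) (hSclique i)
      have h2 := hz' (S i) (hSclique i)
      nlinarith
    have heq : ∀ w' ∈ S i, |x w'| = t * |y w'| + s * |z w'| := by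
      have hle : ∑ w' ∈ S i, |x w'| ≤ ∑ w' ∈ S i, (t * |y w'| + s * |z w'|) :=
        Finset.sum_le_sum (fun w' _ => hptle w')
      have heqsum : ∑ w' ∈ S i, |x w'| = ∑ w' ∈ S i, (t * |y w'| + s * |z w'|) := by
        rw [hxS i]; linarith [hxS i]
      intro w' hw'
      by_contra hne
      have hlt : |x w'| < t * |y w'| + s * |z w'| := lt_of_le_of_ne (hptle w') hne
      have : ∑ w' ∈ S i, |x w'| < ∑ w' ∈ S i, (t * |y w'| + s * |z w'|) :=
        Finset.sum_lt_sum (fun j _ => hptle j) ⟨w', hw', hlt⟩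
      linarith [heqsum]
    rw [← heq w hwi, hx w]
  -- sums of |y| and |z| over each S i equal 1
  have hySeq : ∀ i, ∑ w ∈ S i, |y w| = 1 := by
    intro i
    have hsa : ∑ w ∈ S i, (t * |y w| + s * |z w|) = 1 := by
      rw [Finset.sum_congr rfl (fun w _ => ha w), Finset.sum_const, nsmul_eq_mul]
      have : (S i).card = n := by
        rw [hSdef]
        rw [Finset.card_image_of_injOn]
        · exact Finset.card_range n
        · intro a haa b hbb hab
          exact hinj i a haa b hbb hab
      rw [this]; field_simp
    have h1 := hy' (S i) (hSclique i)
    have h2 := hz' (S i) (hSclique i)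
    rw [Finset.sum_add_distrib, ← Finset.mul_sum, ← Finset.mul_sum] at hsa
    nlinarith
  have hzSeq : ∀ i, ∑ w ∈ S i, |z w| = 1 := by
    intro i
    have hsa : ∑ w ∈ S i, (t * |y w| + s * |z w|) = 1 := by
      rw [Finset.sum_congr rfl (fun w _ => ha w), Finset.sum_const, nsmul_eq_mul]
      have : (S i).card = n := by
        rw [hSdef]
        rw [Finset.card_image_of_injOn]
        · exact Finset.card_range n
        · intro a haa b hbb hab
          exact hinj i a haa b hbb hab
      rw [this]; field_simp
    have h1 := hy' (S i) (hSclique i)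
    have h2 := hz' (S i) (hSclique i)
    rw [Finset.sum_add_distrib, ← Finset.mul_sum, ← Finset.mul_sum] at hsa
    nlinarith
  -- circulant argument: any u with all S-sums equal to 1 has |u| ≡ 1/n
  have habs : ∀ u : V → ℝ, (∀ i, ∑ w ∈ S i, |u w| = 1) → ∀ w, |u w| = 1 / (n : ℝ) := by
    intro u hu
    set g : ZMod (2 * n + 1) → ℝ := fun j => |u (v j)| with hg
    have hu' : ∀ i, ∑ m ∈ Finset.range n, g (i + ((2 * m : ℕ) : ZMod (2 * n + 1))) = 1 := by
      intro i
      rw [← hSsum i (fun w => |u w|)]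
      exact hu i
    have hkey : ∀ i : ZMod (2 * n + 1), g i = g (i + ((2 * n : ℕ) : ZMod (2 * n + 1))) := by
      intro i
      obtain ⟨k, hk⟩ : ∃ k, n = k + 1 := ⟨n - 1, by omega⟩
      have h1 := hu' i
      have h2 := hu' (i + ((2 : ℕ) : ZMod (2 * n + 1)))
      rw [show Finset.range n = Finset.range (k + 1) from by rw [hk]] at h1 h2
      rw [Finset.sum_range_succ'] at h1
      rw [Finset.sum_range_succ] at h2
      have he1 : ∀ m : ℕ, i + ((2 * (m + 1) : ℕ) : ZMod (2 * n + 1)) =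
          (i + ((2 : ℕ) : ZMod (2 * n + 1))) + ((2 * m : ℕ) : ZMod (2 * n + 1)) := by
        intro m; push_cast; ring
      rw [Finset.sum_congr rfl (fun m _ => by rw [he1 m])] at h1
      have he2 : (i + ((2 : ℕ) : ZMod (2 * n + 1))) + ((2 * k : ℕ) : ZMod (2 * n + 1)) =
          i + ((2 * n : ℕ) : ZMod (2 * n + 1)) := by
        have hcast' : ((n : ℕ) : ZMod (2 * n + 1)) = ((k : ℕ) : ZMod (2 * n + 1)) + 1 := by
          have hc := congrArg (Nat.cast (R := ZMod (2 * n + 1))) hk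
          push_cast at hc; exact hc
        push_cast
        linear_combination -2 * hcast'
      rw [he2] at h2
      have he3 : i + ((2 * 0 : ℕ) : ZMod (2 * n + 1)) = i := by norm_num
      rw [he3] at h1
      linarith
    have hstep : ∀ j : ZMod (2 * n + 1), g (j + 1) = g j := by
      intro j
      have hm1 : ((2 * n : ℕ) : ZMod (2 * n + 1)) = -1 := by
        have h0 : ((2 * n + 1 : ℕ) : ZMod (2 * n + 1)) = 0 := ZMod.natCast_self _
        push_cast at h0 ⊢
        linear_combination h0
      have hthis := hkey (j + 1)
      have harg : j + 1 + ((2 * n : ℕ) : ZMod (2 * n + 1)) = j := by rw [hm1]; ring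
      rw [harg] at hthis
      exact hthis
    have hconst : ∀ j, g j = g 0 := fun j => const_of_succ g hstep j 0
    have hval : g 0 = 1 / (n : ℝ) := by
      have h1 := hu' 0
      rw [Finset.sum_congr rfl (fun m _ => hconst _)] at h1
      rw [Finset.sum_const, Finset.card_range, nsmul_eq_mul] at h1
      rw [eq_div_iff (ne_of_gt hnR)]
      linear_combination h1
    intro w
    obtain ⟨j, rfl⟩ := hv.2 w
    rw [show |u (v j)| = g j from rfl, hconst j, hval]
  have hyabs : ∀ w, |y w| = 1 / (n : ℝ) := habs y hySeq
  have hzabs : ∀ w, |z w| = 1 / (n : ℝ) := habs z hzSeq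
  -- conclude y = x and z = x
  have hfinal : ∀ w, y w = x w ∧ z w = x w := by
    intro w
    have h1 := hsum' w
    have h2 : |y w| = |z w| := by rw [hyabs w, hzabs w]
    rcases abs_eq_abs.1 h2 with h3 | h3
    · have hyx : y w = x w := by
        rw [← h1]
        linear_combination s * h3 - y w * hts
      exact ⟨hyx, by rw [← h3]; exact hyx⟩
    · exfalso
      have hxw : x w = (t - s) * y w := by rw [← h1, h3]; ring
      have : |x w| = |t - s| * |y w| := by rw [hxw, abs_mul]
      rw [hx w, hyabs w] at this
      have hts1 : |t - s| < 1 := by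
        rw [abs_lt]; constructor <;> linarith
      nlinarith [one_div_pos.2 hnR]
  exact ⟨funext fun w => (hfinal w).1, funext fun w => (hfinal w).2⟩
end
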